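/- In the static undirected fitness model on n nodes where, conditional on fitnesses θ ∈ ℝⁿ, each edge {i,j} (i ≠ j) is present independently with probability σ(θ_i + θ_j), and the θ_i are i.i.d.-marginal Gaussian N(m, s²) with pairwise correlation r, the expected density E[δ] = E[(2/(n(n-1))) ∑_{i<j} a_{ij}] equals I(2m, 2s²(1+r)). -/

import Mathlib

open MeasureTheory ProbabilityTheory Real Finset

/-- The standard logistic sigmoid. -/
noncomputable def logistic (x : ℝ) : ℝ := 1 / (1 + Real.exp (-x))

/-- The logistic-normal integral `I(m, v) = E[σ(X)]`, `X ~ N(m, v)`. -/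
noncomputable def logisticNormalI (m : ℝ) (v : NNReal) : ℝ :=
  ∫ x, logistic x ∂(gaussianReal m v)

/-- Bivariate Gaussian density with means `mi, mj`, common variance `s²` and
correlation `r`. -/
noncomputable def bivGaussianDensity (mi mj s r : ℝ) (p : ℝ × ℝ) : ℝ :=
  (1 / (2 * Real.pi * s ^ 2 * Real.sqrt (1 - r ^ 2))) *
    Real.exp (-(1 / (2 * s ^ 2 * (1 - r ^ 2))) *
      ((p.1 - mi) ^ 2 - 2 * r * (p.1 - mi) * (p.2 - mj) + (p.2 - mj) ^ 2))

/-!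
By linearity of expectation, `E[δ]` is the average over the `n(n-1)/2` pairs `i < j` of
`E[σ(θ_i + θ_j)]`, so it suffices that `θ_i + θ_j ~ N(2m, 2s²(1+r))` for `i ≠ j`.
With equal variances, the sum and the difference of a bivariate Gaussian pair are independent;
concretely the joint density factors along the lines `x + y = u` as
`ρ(x, u - x) = φ_{2m, 2s²(1+r)}(u) · φ_{u/2, s²(1-r)/2}(x)`, so integrating out `x` after the
shear `(x, y) ↦ (x, x + y)` leaves exactly the Gaussian density of the sum.
-/

open scoped ENNReal

lemma logistic_eq_sigmoid : logistic = sigmoid := by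
  ext x; rw [logistic, sigmoid_def, one_div]

lemma map_add_prod_withDensity {G : Type*} [MeasurableSpace G] [AddCommGroup G]
    [MeasurableAdd₂ G] [MeasurableNeg G] (μ : Measure G) [SFinite μ] [μ.IsAddRightInvariant]
    {ρ : G × G → ℝ≥0∞} (hρ : Measurable ρ) :
    ((μ.prod μ).withDensity ρ).map (fun p => p.1 + p.2) =
      μ.withDensity fun u => ∫⁻ x, ρ (x, u - x) ∂μ := by
  have hadd : Measurable fun p : G × G => p.1 + p.2 := measurable_fst.add measurable_snd
  ext s hs
  set A := (fun p : G × G => p.1 + p.2) ⁻¹' s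
  rw [Measure.map_apply hadd hs, withDensity_apply _ (hadd hs), withDensity_apply _ hs,
    ← lintegral_indicator (hadd hs), ← lintegral_indicator hs,
    ← (measurePreserving_prod_sub μ μ).lintegral_comp_emb
      (MeasurableEquiv.shearSubRight G).measurableEmbedding,
    lintegral_prod_symm (fun z => A.indicator ρ (z.1, z.2 - z.1))
      ((hρ.indicator (hadd hs)).comp (by fun_prop)).aemeasurable]
  refine lintegral_congr fun u => ?_
  by_cases hu : u ∈ s <;> simp [A, Set.indicator, hu]

lemma bivGaussianDensity_apply_sub (mi mj : ℝ) {s r : ℝ} (hs : s ≠ 0) (hr : |r| < 1)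
    (u x : ℝ) :
    bivGaussianDensity mi mj s r (x, u - x) =
      gaussianPDFReal (mi + mj) (2 * s ^ 2 * (1 + r)).toNNReal u *
        gaussianPDFReal ((u + mi - mj) / 2) (s ^ 2 * (1 - r) / 2).toNNReal x := by
  obtain ⟨hr₁, hr₂⟩ := abs_lt.mp hr
  have hplus : 0 < 1 + r := by linarith
  have hminus : 0 < 1 - r := by linarith
  have hsqrt : √(2 * π * (2 * s ^ 2 * (1 + r))) * √(2 * π * (s ^ 2 * (1 - r) / 2)) =
      2 * π * s ^ 2 * √(1 - r ^ 2) := by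
    rw [← Real.sqrt_mul (by positivity), ← Real.sqrt_sq (by positivity : 0 ≤ 2 * π * s ^ 2),
      ← Real.sqrt_mul (by positivity)]
    ring_nf
  simp only [bivGaussianDensity, gaussianPDFReal,
    Real.coe_toNNReal _ (by positivity : 0 ≤ 2 * s ^ 2 * (1 + r)),
    Real.coe_toNNReal _ (by positivity : 0 ≤ s ^ 2 * (1 - r) / 2)]
  rw [mul_mul_mul_comm, ← Real.exp_add, ← mul_inv, hsqrt, one_div]
  congr 2
  have : 1 - r ^ 2 ≠ 0 := by nlinarith
  field_simp
  ring

lemma map_add_withDensity_bivGaussianDensity (mi mj : ℝ) {s r : ℝ} (hs : s ≠ 0)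
    (hr : |r| < 1) :
    ((volume : Measure (ℝ × ℝ)).withDensity
        fun p => ENNReal.ofReal (bivGaussianDensity mi mj s r p)).map (fun p => p.1 + p.2) =
      gaussianReal (mi + mj) (2 * s ^ 2 * (1 + r)).toNNReal := by
  obtain ⟨hr₁, hr₂⟩ := abs_lt.mp hr
  have hvar_sum : (2 * s ^ 2 * (1 + r)).toNNReal ≠ 0 := by
    rw [ne_eq, Real.toNNReal_eq_zero, not_le]
    have : 0 < 1 + r := by linarith
    positivity
  have hvar_cond : (s ^ 2 * (1 - r) / 2).toNNReal ≠ 0 := by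
    rw [ne_eq, Real.toNNReal_eq_zero, not_le]
    have : 0 < 1 - r := by linarith
    positivity
  rw [Measure.volume_eq_prod,
    map_add_prod_withDensity volume (by unfold bivGaussianDensity; fun_prop),
    gaussianReal_of_var_ne_zero _ hvar_sum]
  congr 1
  ext u
  simp_rw [bivGaussianDensity_apply_sub mi mj hs hr u,
    ENNReal.ofReal_mul (gaussianPDFReal_nonneg _ _ _)]
  rw [lintegral_const_mul _ (measurable_gaussianPDFReal _ _).ennreal_ofReal]
  exact (congrArg (gaussianPDF _ _ u * ·) (lintegral_gaussianPDF_eq_one _ hvar_cond)).trans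
    (mul_one _)

/-- In the static undirected fitness model where, conditional on
the fitnesses `θ`, each edge `{i,j}` is present independently with probability
`σ(θ_i + θ_j)` (so that `E[a_ij | θ] = σ(θ_i + θ_j)`), and the fitnesses are
jointly Gaussian with all means `m`, variances `s²` and pairwise correlations
`r`, the expected density `E[δ] = E[(2/(n(n-1))) ∑_{i<j} a_{ij}]` equals
`I(2m, 2s²(1+r))`. -/
theorem fitness_model_expected_density
    (n : ℕ) (hn : 2 ≤ n) (m s r : ℝ) (hs : 0 < s) (hr : |r| < 1)
    (μθ : Measure (Fin n → ℝ)) [IsProbabilityMeasure μθ]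
    (hpair : ∀ i j : Fin n, i ≠ j →
      Measure.map (fun θ => (θ i, θ j)) μθ =
        (volume : Measure (ℝ × ℝ)).withDensity
          (fun p => ENNReal.ofReal (bivGaussianDensity m m s r p))) :
    ∫ θ : Fin n → ℝ,
        (2 / ((n : ℝ) * ((n : ℝ) - 1))) *
          ∑ p ∈ Finset.univ.filter (fun p : Fin n × Fin n => p.1 < p.2),
            logistic (θ p.1 + θ p.2) ∂μθ =
      logisticNormalI (2 * m) (Real.toNNReal (2 * s ^ 2 * (1 + r))) := by
  have hlogistic : Continuous logistic := logistic_eq_sigmoid ▸ continuous_sigmoid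
  have hsum_law : ∀ i j : Fin n, i ≠ j →
      μθ.map (fun θ => θ i + θ j) = gaussianReal (2 * m) (2 * s ^ 2 * (1 + r)).toNNReal := by
    intro i j hij
    rw [two_mul, ← map_add_withDensity_bivGaussianDensity m m hs.ne' hr, ← hpair i j hij,
      Measure.map_map (by fun_prop) (by fun_prop)]
    rfl
  have hedge : ∀ p ∈ univ.filter (fun p : Fin n × Fin n => p.1 < p.2),
      ∫ θ, logistic (θ p.1 + θ p.2) ∂μθ =
        logisticNormalI (2 * m) (2 * s ^ 2 * (1 + r)).toNNReal := by
    intro p hp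
    rw [logisticNormalI, ← hsum_law p.1 p.2 (mem_filter.mp hp).2.ne,
      integral_map (by fun_prop) hlogistic.aestronglyMeasurable]
  have hint : ∀ p ∈ univ.filter (fun p : Fin n × Fin n => p.1 < p.2),
      Integrable (fun θ => logistic (θ p.1 + θ p.2)) μθ := fun p _ =>
    Integrable.of_bound (by fun_prop) 1 (ae_of_all _ fun θ => by
      rw [logistic_eq_sigmoid, norm_of_nonneg (sigmoid_nonneg _)]; exact sigmoid_le_one _)
  have hn₁ : (n : ℝ) - 1 ≠ 0 := by
    have : (2 : ℝ) ≤ n := by exact_mod_cast hn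
    linarith
  rw [integral_const_mul, integral_finsetSum _ hint, sum_congr rfl hedge, sum_const,
    nsmul_eq_mul, Fintype.card_product_filter_lt, Fintype.card_fin, Nat.cast_choose_two]
  field_simp
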